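/- Let k be a Noetherian commutative ring, m ≥ 0, and W a k[S_m]-module. Suppose 0 → U¹ → M(W) → U² → 0 is a short exact sequence of FI-modules where U¹ is generated in degree m (i.e., U¹_n is spanned by the images of U¹_m under all FI-maps for every n). Then U¹ ≅ M(U¹_m) and U² ≅ M(U²_m), i.e., both are 'induced' FI-modules determined by their degree-m parts via U_n = Ind_{S_m × S_{n−m}}^{S_n}(U_m ⊠ k). -/

import Mathlib

/-- An FI-module (given by its degreewise data `V`, `Vmap`) is *induced from degree `m`*,
i.e. isomorphic to `M(V_m)` with `M(W)_n = Ind_{S_m × S_{n-m}}^{S_n}(W ⊠ k), via the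
canonical map: for every `n`, the natural map
`k[Inj(Fin m, Fin n)] ⊗ V_m → V_n`, `g ⊗ u ↦ V(g)(u)`, is surjective with kernel exactly
the span of the relations `(g ∘ τ) ⊗ u - g ⊗ V(τ)(u)` for `τ ∈ S_m`. -/
def IsInducedFrom (k : Type) [CommRing k] (V : ℕ → Type) [∀ n, AddCommGroup (V n)]
    [∀ n, Module k (V n)]
    (Vmap : ∀ {a b : ℕ}, (Fin a ↪ Fin b) → (V a →ₗ[k] V b)) (m : ℕ) : Prop :=
  ∀ n : ℕ,
    Function.Surjective ⇑(Finsupp.lsum k (fun g : Fin m ↪ Fin n => Vmap g)) ∧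
    LinearMap.ker (Finsupp.lsum k (fun g : Fin m ↪ Fin n => Vmap g)) =
      Submodule.span k {x | ∃ (τ : Equiv.Perm (Fin m)) (g : Fin m ↪ Fin n) (u : V m),
        x = Finsupp.single (τ.toEmbedding.trans g) u
          - Finsupp.single g (Vmap τ.toEmbedding u)}

/-
Sorting the image of an injection `g : Fin m ↪ Fin n` picks a representative `g.sorted` of
its orbit under precomposition with `S_m`, and `single g u ↦ single g.sorted (σ u)` with
`g = g.sorted ∘ σ` is a normal form whose kernel is exactly the span of the relations. Hence
`k[Inj(m, n)] ⊗_{S_m} V_m` behaves like a direct sum of copies of `V_m`, one for each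
`m`-subset of `Fin n`, so it preserves the injectivity of `U¹_m → M(W)_m`; this gives the
kernel for `U¹`. For `U²` the kernel is obtained by a diagram chase through `M(W)`, using
that the relations of `M(W)` map to relations of `U²`.
-/

namespace Function.Embedding

variable {m n : ℕ}

noncomputable def sorted (g : Fin m ↪ Fin n) : Fin m ↪ Fin n :=
  ((Finset.univ.map g).orderEmbOfFin (by simp)).toEmbedding

theorem range_sorted (g : Fin m ↪ Fin n) : Set.range g.sorted = Set.range g := by
  simp [sorted, Finset.range_orderEmbOfFin]

theorem sorted_eq_of_map_univ_eq {g g' : Fin m ↪ Fin n}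
    (h : Finset.univ.map g = Finset.univ.map g') : g.sorted = g'.sorted := by
  simp only [sorted, h]

theorem sorted_permTrans (τ : Equiv.Perm (Fin m)) (g : Fin m ↪ Fin n) :
    (τ.toEmbedding.trans g).sorted = g.sorted :=
  sorted_eq_of_map_univ_eq (by rw [← Finset.map_map, Finset.map_univ_equiv])

noncomputable def sortPerm (g : Fin m ↪ Fin n) : Equiv.Perm (Fin m) :=
  (Equiv.ofInjective g g.injective).trans
    ((Equiv.setCongr g.range_sorted.symm).trans
      (Equiv.ofInjective g.sorted g.sorted.injective).symm)

theorem sorted_sortPerm (g : Fin m ↪ Fin n) (x : Fin m) : g.sorted (g.sortPerm x) = g x := by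
  simp only [sortPerm, Equiv.trans_apply]
  rw [Equiv.apply_ofInjective_symm g.sorted.injective]
  rfl

theorem sortPerm_trans_sorted (g : Fin m ↪ Fin n) : g.sortPerm.toEmbedding.trans g.sorted = g :=
  ext g.sorted_sortPerm

theorem sortPerm_permTrans (τ : Equiv.Perm (Fin m)) (g : Fin m ↪ Fin n) :
    (τ.toEmbedding.trans g).sortPerm = τ.trans g.sortPerm :=
  Equiv.ext fun x => g.sorted.injective <| by
    have h := sorted_sortPerm (τ.toEmbedding.trans g) x
    rw [sorted_permTrans] at h
    rw [h, Equiv.trans_apply, sorted_sortPerm]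
    rfl

end Function.Embedding

namespace InducedFI

open Function.Embedding

variable {k : Type} [CommRing k] {U V W : ℕ → Type}
  [∀ i, AddCommGroup (U i)] [∀ i, Module k (U i)]
  [∀ i, AddCommGroup (V i)] [∀ i, Module k (V i)]
  [∀ i, AddCommGroup (W i)] [∀ i, Module k (W i)]
  (Umap : ∀ {a b : ℕ}, (Fin a ↪ Fin b) → (U a →ₗ[k] U b))
  (Vmap : ∀ {a b : ℕ}, (Fin a ↪ Fin b) → (V a →ₗ[k] V b))
  (Wmap : ∀ {a b : ℕ}, (Fin a ↪ Fin b) → (W a →ₗ[k] W b))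

noncomputable def canonicalMap (m n : ℕ) : ((Fin m ↪ Fin n) →₀ V m) →ₗ[k] V n :=
  Finsupp.lsum k fun g => Vmap g

noncomputable def relations (m n : ℕ) : Submodule k ((Fin m ↪ Fin n) →₀ V m) :=
  Submodule.span k {x | ∃ (τ : Equiv.Perm (Fin m)) (g : Fin m ↪ Fin n) (u : V m),
    x = Finsupp.single (τ.toEmbedding.trans g) u - Finsupp.single g (Vmap τ.toEmbedding u)}

noncomputable def normalize (m n : ℕ) :
    ((Fin m ↪ Fin n) →₀ V m) →ₗ[k] ((Fin m ↪ Fin n) →₀ V m) :=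
  Finsupp.lsum k fun g => (Finsupp.lsingle g.sorted).comp (Vmap g.sortPerm.toEmbedding)

variable {m n : ℕ}

@[simp]
theorem canonicalMap_single (g : Fin m ↪ Fin n) (u : V m) :
    canonicalMap Vmap m n (Finsupp.single g u) = Vmap g u := by
  simp [canonicalMap]

@[simp]
theorem normalize_single (g : Fin m ↪ Fin n) (u : V m) :
    normalize Vmap m n (Finsupp.single g u) =
      Finsupp.single g.sorted (Vmap g.sortPerm.toEmbedding u) := by
  simp [normalize]

theorem relations_le_ker_canonicalMap
    (hcomp : ∀ {a b c : ℕ} (f : Fin a ↪ Fin b) (g : Fin b ↪ Fin c),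
      Vmap (f.trans g) = (Vmap g).comp (Vmap f)) :
    relations Vmap m n ≤ LinearMap.ker (canonicalMap Vmap m n) := by
  rw [relations, Submodule.span_le]
  rintro _ ⟨τ, g, u, rfl⟩
  simp [hcomp τ.toEmbedding g]

theorem sub_normalize_mem_relations (x : (Fin m ↪ Fin n) →₀ V m) :
    x - normalize Vmap m n x ∈ relations Vmap m n := by
  induction x using Finsupp.induction_linear with
  | zero => simp
  | add x y hx hy => simpa only [map_add, add_sub_add_comm] using add_mem hx hy
  | single g u =>
    refine Submodule.subset_span ⟨g.sortPerm, g.sorted, u, ?_⟩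
    rw [normalize_single, sortPerm_trans_sorted]

theorem ker_normalize
    (hcomp : ∀ {a b c : ℕ} (f : Fin a ↪ Fin b) (g : Fin b ↪ Fin c),
      Vmap (f.trans g) = (Vmap g).comp (Vmap f)) :
    LinearMap.ker (normalize Vmap m n) = relations Vmap m n := by
  refine le_antisymm (fun x hx => ?_) ?_
  · simpa [LinearMap.mem_ker.mp hx] using sub_normalize_mem_relations Vmap x
  · rw [relations, Submodule.span_le]
    rintro _ ⟨τ, g, u, rfl⟩
    simp only [SetLike.mem_coe, LinearMap.mem_ker, map_sub, normalize_single, sorted_permTrans,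
      sortPerm_permTrans, Equiv.trans_toEmbedding, hcomp, LinearMap.comp_apply, sub_self]

variable {Umap Vmap Wmap}

section Natural

variable (f : ∀ i, V i →ₗ[k] W i)

theorem canonicalMap_comp_mapRange
    (hf : ∀ {a b : ℕ} (g : Fin a ↪ Fin b), (f b).comp (Vmap g) = (Wmap g).comp (f a)) :
    (canonicalMap Wmap m n).comp (Finsupp.mapRange.linearMap (f m)) =
      (f n).comp (canonicalMap Vmap m n) :=
  Finsupp.lhom_ext fun g u => by simpa using (LinearMap.congr_fun (hf g) u).symm

theorem normalize_comp_mapRange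
    (hf : ∀ {a b : ℕ} (g : Fin a ↪ Fin b), (f b).comp (Vmap g) = (Wmap g).comp (f a)) :
    (normalize Wmap m n).comp (Finsupp.mapRange.linearMap (f m)) =
      (Finsupp.mapRange.linearMap (f m)).comp (normalize Vmap m n) :=
  Finsupp.lhom_ext fun g u => by
    have h := LinearMap.congr_fun (hf g.sortPerm.toEmbedding) u
    simp only [LinearMap.comp_apply] at h
    simp [h]

theorem map_relations_le
    (hf : ∀ {a b : ℕ} (g : Fin a ↪ Fin b), (f b).comp (Vmap g) = (Wmap g).comp (f a)) :
    (relations Vmap m n).map (Finsupp.mapRange.linearMap (f m)) ≤ relations Wmap m n := by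
  rw [relations, Submodule.map_span, Submodule.span_le]
  rintro _ ⟨_, ⟨τ, g, u, rfl⟩, rfl⟩
  refine Submodule.subset_span ⟨τ, g, f m u, ?_⟩
  have h := LinearMap.congr_fun (hf τ.toEmbedding) u
  simp only [LinearMap.comp_apply] at h
  simp [Finsupp.mapRange_sub, h]

theorem surjective_canonicalMap_of_surjective
    (hf : ∀ {a b : ℕ} (g : Fin a ↪ Fin b), (f b).comp (Vmap g) = (Wmap g).comp (f a))
    (hV : Function.Surjective (canonicalMap Vmap m n))
    (hfn : Function.Surjective (f n)) : Function.Surjective (canonicalMap Wmap m n) := by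
  intro w
  obtain ⟨v, rfl⟩ := hfn w
  obtain ⟨x, rfl⟩ := hV v
  exact ⟨_, LinearMap.congr_fun (canonicalMap_comp_mapRange f hf) x⟩

end Natural

theorem surjective_canonicalMap_of_mem_span
    (h : ∀ y : V n, y ∈ Submodule.span k {x | ∃ (g : Fin m ↪ Fin n) (u : V m), x = Vmap g u}) :
    Function.Surjective (canonicalMap Vmap m n) := by
  have hspan : Submodule.span k {x | ∃ (g : Fin m ↪ Fin n) (u : V m), x = Vmap g u} ≤
      LinearMap.range (canonicalMap Vmap m n) := by
    rw [Submodule.span_le]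
    rintro _ ⟨g, u, rfl⟩
    exact ⟨Finsupp.single g u, canonicalMap_single Vmap g u⟩
  exact fun y => hspan (h y)

theorem ker_canonicalMap_eq_of_injective
    (hUcomp : ∀ {a b c : ℕ} (f : Fin a ↪ Fin b) (g : Fin b ↪ Fin c),
      Umap (f.trans g) = (Umap g).comp (Umap f))
    (hVcomp : ∀ {a b c : ℕ} (f : Fin a ↪ Fin b) (g : Fin b ↪ Fin c),
      Vmap (f.trans g) = (Vmap g).comp (Vmap f))
    (f : ∀ i, U i →ₗ[k] V i)
    (hf : ∀ {a b : ℕ} (g : Fin a ↪ Fin b), (f b).comp (Umap g) = (Vmap g).comp (f a))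
    (hfm : Function.Injective (f m))
    (hV : LinearMap.ker (canonicalMap Vmap m n) = relations Vmap m n) :
    LinearMap.ker (canonicalMap Umap m n) = relations Umap m n := by
  refine le_antisymm (fun x hx => ?_) (relations_le_ker_canonicalMap Umap hUcomp)
  have hfx : Finsupp.mapRange.linearMap (f m) x ∈ LinearMap.ker (normalize Vmap m n) := by
    rw [ker_normalize Vmap hVcomp, ← hV, LinearMap.mem_ker, ← LinearMap.comp_apply,
      canonicalMap_comp_mapRange f hf, LinearMap.comp_apply, LinearMap.mem_ker.mp hx, map_zero]
  have hnx : normalize Umap m n x = 0 := by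
    refine Finsupp.mapRange_injective (f m) (map_zero _) hfm ?_
    rw [LinearMap.mem_ker, ← LinearMap.comp_apply, normalize_comp_mapRange f hf] at hfx
    simpa using hfx
  rwa [← ker_normalize Umap hUcomp]

theorem ker_canonicalMap_eq_of_exact
    (hWcomp : ∀ {a b c : ℕ} (f : Fin a ↪ Fin b) (g : Fin b ↪ Fin c),
      Wmap (f.trans g) = (Wmap g).comp (Wmap f))
    (f : ∀ i, U i →ₗ[k] V i) (p : ∀ i, V i →ₗ[k] W i)
    (hf : ∀ {a b : ℕ} (g : Fin a ↪ Fin b), (f b).comp (Umap g) = (Vmap g).comp (f a))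
    (hp : ∀ {a b : ℕ} (g : Fin a ↪ Fin b), (p b).comp (Vmap g) = (Wmap g).comp (p a))
    (hpf : (p m).comp (f m) = 0) (hpm : Function.Surjective (p m))
    (hexact : LinearMap.ker (p n) ≤ LinearMap.range (f n))
    (hU : Function.Surjective (canonicalMap Umap m n))
    (hV : LinearMap.ker (canonicalMap Vmap m n) = relations Vmap m n) :
    LinearMap.ker (canonicalMap Wmap m n) = relations Wmap m n := by
  refine le_antisymm (fun x hx => ?_) (relations_le_ker_canonicalMap Wmap hWcomp)
  obtain ⟨w, rfl⟩ := Finsupp.mapRange_surjective (p m) (map_zero _) hpm x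
  obtain ⟨z, hz⟩ : canonicalMap Vmap m n w ∈ LinearMap.range (f n) := by
    refine hexact ?_
    rw [LinearMap.mem_ker, ← LinearMap.comp_apply, ← canonicalMap_comp_mapRange p hp]
    exact hx
  obtain ⟨y, rfl⟩ := hU z
  have hrel : w - Finsupp.mapRange.linearMap (f m) y ∈ relations Vmap m n := by
    rw [← hV, LinearMap.mem_ker, map_sub, ← LinearMap.comp_apply,
      canonicalMap_comp_mapRange f hf, LinearMap.comp_apply, hz, sub_self]
  have hpy : Finsupp.mapRange.linearMap (p m) (Finsupp.mapRange.linearMap (f m) y) = 0 := by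
    rw [← LinearMap.comp_apply, ← Finsupp.mapRange.linearMap_comp, hpf]
    ext
    simp
  have := map_relations_le p hp (Submodule.mem_map_of_mem hrel)
  rwa [map_sub, hpy, sub_zero] at this

end InducedFI

open InducedFI

theorem sub_and_quotient_of_MW_induced_general (k : Type) [CommRing k]
    (m : ℕ)
    (U1 MW U2 : ℕ → Type)
    [∀ n, AddCommGroup (U1 n)] [∀ n, Module k (U1 n)]
    [∀ n, AddCommGroup (MW n)] [∀ n, Module k (MW n)]
    [∀ n, AddCommGroup (U2 n)] [∀ n, Module k (U2 n)]
    (U1map : ∀ {a b : ℕ}, (Fin a ↪ Fin b) → (U1 a →ₗ[k] U1 b))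
    (MWmap : ∀ {a b : ℕ}, (Fin a ↪ Fin b) → (MW a →ₗ[k] MW b))
    (U2map : ∀ {a b : ℕ}, (Fin a ↪ Fin b) → (U2 a →ₗ[k] U2 b))
    (hU1comp : ∀ {a b c : ℕ} (f : Fin a ↪ Fin b) (g : Fin b ↪ Fin c),
      U1map (f.trans g) = (U1map g).comp (U1map f))
    (hMWcomp : ∀ {a b c : ℕ} (f : Fin a ↪ Fin b) (g : Fin b ↪ Fin c),
      MWmap (f.trans g) = (MWmap g).comp (MWmap f))
    (hU2comp : ∀ {a b c : ℕ} (f : Fin a ↪ Fin b) (g : Fin b ↪ Fin c),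
      U2map (f.trans g) = (U2map g).comp (U2map f))
    (ι : ∀ n, U1 n →ₗ[k] MW n) (π : ∀ n, MW n →ₗ[k] U2 n)
    (hιnat : ∀ {a b : ℕ} (g : Fin a ↪ Fin b), (ι b).comp (U1map g) = (MWmap g).comp (ι a))
    (hπnat : ∀ {a b : ℕ} (g : Fin a ↪ Fin b), (π b).comp (MWmap g) = (U2map g).comp (π a))
    (hinj : ∀ n, Function.Injective ⇑(ι n))
    (hsurj : ∀ n, Function.Surjective ⇑(π n))
    (hexact : ∀ n, LinearMap.ker (π n) = LinearMap.range (ι n))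
    (hMW : IsInducedFrom k MW (fun g => MWmap g) m)
    (hU1gen : ∀ n (y : U1 n),
      y ∈ Submodule.span k {x | ∃ (g : Fin m ↪ Fin n) (u : U1 m), x = U1map g u}) :
    IsInducedFrom k U1 (fun g => U1map g) m ∧ IsInducedFrom k U2 (fun g => U2map g) m := by
  have hU1 : ∀ n, Function.Surjective (canonicalMap (fun g => U1map g) m n) :=
    fun n => surjective_canonicalMap_of_mem_span (hU1gen n)
  have hπι : (π m).comp (ι m) = 0 := LinearMap.range_le_ker_iff.mp (hexact m).ge
  refine ⟨fun n => ⟨hU1 n, ?_⟩, fun n => ⟨?_, ?_⟩⟩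
  · exact ker_canonicalMap_eq_of_injective hU1comp hMWcomp ι hιnat (hinj m) (hMW n).2
  · exact surjective_canonicalMap_of_surjective π hπnat (hMW n).1 (hsurj n)
  · exact ker_canonicalMap_eq_of_exact hU2comp ι π hιnat hπnat hπι (hsurj m) (hexact n).le
      (hU1 n) (hMW n).2

/-- Over a Noetherian ring `k`, if `0 → U¹ → M(W) → U² → 0` is a degreewise short exact
sequence of FI-modules in which the middle term is an induced module `M(W)` generated in
degree `m` and `U¹` is generated in degree `m`, then both `U¹` and `U²` are induced:
`U¹ ≅ M(U¹_m)` and `U² ≅ M(U²_m)`. -/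
theorem sub_and_quotient_of_MW_induced (k : Type) [CommRing k] [IsNoetherianRing k]
    (m : ℕ)
    (U1 MW U2 : ℕ → Type)
    [∀ n, AddCommGroup (U1 n)] [∀ n, Module k (U1 n)]
    [∀ n, AddCommGroup (MW n)] [∀ n, Module k (MW n)]
    [∀ n, AddCommGroup (U2 n)] [∀ n, Module k (U2 n)]
    (U1map : ∀ {a b : ℕ}, (Fin a ↪ Fin b) → (U1 a →ₗ[k] U1 b))
    (MWmap : ∀ {a b : ℕ}, (Fin a ↪ Fin b) → (MW a →ₗ[k] MW b))
    (U2map : ∀ {a b : ℕ}, (Fin a ↪ Fin b) → (U2 a →ₗ[k] U2 b))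
    (hU1id : ∀ n, U1map (Function.Embedding.refl (Fin n)) = LinearMap.id)
    (hMWid : ∀ n, MWmap (Function.Embedding.refl (Fin n)) = LinearMap.id)
    (hU2id : ∀ n, U2map (Function.Embedding.refl (Fin n)) = LinearMap.id)
    (hU1comp : ∀ {a b c : ℕ} (f : Fin a ↪ Fin b) (g : Fin b ↪ Fin c),
      U1map (f.trans g) = (U1map g).comp (U1map f))
    (hMWcomp : ∀ {a b c : ℕ} (f : Fin a ↪ Fin b) (g : Fin b ↪ Fin c),
      MWmap (f.trans g) = (MWmap g).comp (MWmap f))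
    (hU2comp : ∀ {a b c : ℕ} (f : Fin a ↪ Fin b) (g : Fin b ↪ Fin c),
      U2map (f.trans g) = (U2map g).comp (U2map f))
    (ι : ∀ n, U1 n →ₗ[k] MW n) (π : ∀ n, MW n →ₗ[k] U2 n)
    (hιnat : ∀ {a b : ℕ} (g : Fin a ↪ Fin b), (ι b).comp (U1map g) = (MWmap g).comp (ι a))
    (hπnat : ∀ {a b : ℕ} (g : Fin a ↪ Fin b), (π b).comp (MWmap g) = (U2map g).comp (π a))
    (hinj : ∀ n, Function.Injective ⇑(ι n))
    (hsurj : ∀ n, Function.Surjective ⇑(π n))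
    (hexact : ∀ n, LinearMap.ker (π n) = LinearMap.range (ι n))
    (hMW : IsInducedFrom k MW (fun g => MWmap g) m)
    (hU1gen : ∀ n (y : U1 n),
      y ∈ Submodule.span k {x | ∃ (g : Fin m ↪ Fin n) (u : U1 m), x = U1map g u}) :
    IsInducedFrom k U1 (fun g => U1map g) m ∧ IsInducedFrom k U2 (fun g => U2map g) m :=
  sub_and_quotient_of_MW_induced_general k m U1 MW U2 U1map MWmap U2map hU1comp hMWcomp hU2comp ι π
    hιnat hπnat hinj hsurj hexact hMW hU1gen
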